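/- arXiv:2104.01186 — 2 statements merged into one kernel-verified Lean document; each statement's English description precedes it below -/
import Mathlib

section
/- The number of Dyck paths of semilength n avoiding the factor UUU equals the n-th Motzkin number. -/
/-- Every prefix of the path has nonnegative sum (the path stays weakly above the x-axis). -/
def NonnegPrefixes (w : List ℤ) : Prop := ∀ p ∈ w.inits, 0 ≤ p.sum

/-- A Dyck word: steps U = 1 and D = -1, nonnegative prefixes, ending at height 0. -/
def IsDyckWord (w : List ℤ) : Prop :=
  (∀ s ∈ w, s = 1 ∨ s = -1) ∧ NonnegPrefixes w ∧ w.sum = 0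

/-- A Motzkin path: steps U = 1, F = 0, D = -1, nonnegative prefixes, ending at height 0. -/
def IsMotzkinWord (w : List ℤ) : Prop :=
  (∀ s ∈ w, s = 1 ∨ s = 0 ∨ s = -1) ∧ NonnegPrefixes w ∧ w.sum = 0

/-- A Dyck meander with catastrophes: steps U = 1, D = -1, D_i = -i (i ≥ 2),
nonnegative, and every catastrophe step D_i (i ≥ 2) lands exactly at height 0. -/
def IsDyckMeanderCat (w : List ℤ) : Prop :=
  (∀ s ∈ w, s = 1 ∨ s ≤ -1) ∧ NonnegPrefixes w ∧
    ∀ i, i < w.length → w.getD i 0 ≤ -2 → (w.take (i+1)).sum = 0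

/-- A Motzkin meander with catastrophes: steps U = 1, F = 0, D = -1, D_i = -i (i ≥ 2),
nonnegative, every catastrophe landing exactly at height 0. -/
def IsMotzkinMeanderCat (w : List ℤ) : Prop :=
  (∀ s ∈ w, s ≤ 1) ∧ NonnegPrefixes w ∧
    ∀ i, i < w.length → w.getD i 0 ≤ -2 → (w.take (i+1)).sum = 0

def IsDyckExcursionCat (w : List ℤ) : Prop := IsDyckMeanderCat w ∧ w.sum = 0

def IsMotzkinExcursionCat (w : List ℤ) : Prop := IsMotzkinMeanderCat w ∧ w.sum = 0

/-- The factor `pat` occurs in `w` starting at position `i`. -/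
def OccursAt (pat w : List ℤ) (i : ℕ) : Prop := pat <+: w.drop i

/-- `w` has no occurrence of the factor `pat`. -/
def Avoids (pat w : List ℤ) : Prop := ∀ i, ¬ OccursAt pat w i

/-- `w` has no occurrence of `pat` starting at height h > 0. -/
def AvoidsAtPosHeight (pat w : List ℤ) : Prop :=
  ∀ i, OccursAt pat w i → (w.take i).sum ≤ 0

/-- `w` has no occurrence of `pat` starting at height h ≥ 2. -/
def AvoidsAtHeightGe2 (pat w : List ℤ) : Prop :=
  ∀ i, OccursAt pat w i → (w.take i).sum < 2

def pUUU : List ℤ := [1, 1, 1]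
def pDUD : List ℤ := [-1, 1, -1]
def pUUD : List ℤ := [1, 1, -1]
def pUD : List ℤ := [1, -1]
def pDU : List ℤ := [-1, 1]

/-!
First-return decomposition: a nonempty Dyck path is `U a D b` with `a`, `b` Dyck paths, and it
avoids `UUU` iff `U a` and `b` do. Since `a` cannot start with `UU`, either `a` is empty or
`a = U D a'` with `a'` an arbitrary `UUU`-avoiding Dyck path. Hence the paths of semilength `n + 1`
are the `U D b` (counted by `M n`) and the `U U D a' D b` (counted by `∑ M k * M (n - 1 - k)`).
-/

theorem List.prefix_append_cons_iff_of_notMem {α : Type*} {p l r : List α} {x : α}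
    (hx : x ∉ p) : p <+: l ++ x :: r ↔ p <+: l := by
  refine ⟨fun h => ?_, fun h => h.trans (List.prefix_append l _)⟩
  rcases le_or_gt p.length l.length with hle | hlt
  · exact List.prefix_of_prefix_length_le h (List.prefix_append l _) hle
  · have hpre : l ++ [x] <+: p :=
      List.prefix_of_prefix_length_le (by simp) h (by simpa using hlt)
    exact absurd (hpre.subset (by simp)) hx

theorem avoids_cons_iff {pat w : List ℤ} {x : ℤ} :
    Avoids pat (x :: w) ↔ ¬ pat <+: x :: w ∧ Avoids pat w := by
  refine ⟨fun h => ⟨h 0, fun i => h (i + 1)⟩, fun ⟨h₀, h⟩ i => ?_⟩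
  cases i with
  | zero => exact h₀
  | succ i => exact h i

theorem avoids_append_cons_iff {pat a b : List ℤ} {x : ℤ} (hx : x ∉ pat) :
    Avoids pat (a ++ x :: b) ↔ Avoids pat a ∧ Avoids pat b := by
  induction a with
  | nil =>
    rcases pat with _ | ⟨y, pat⟩
    · simp [Avoids, OccursAt]
    · have hnil : Avoids (y :: pat) [] := fun i => by simp [OccursAt]
      simp_all [avoids_cons_iff, eq_comm]
  | cons y a ih =>
    rw [List.cons_append, avoids_cons_iff, avoids_cons_iff, ih, ← List.cons_append,
      List.prefix_append_cons_iff_of_notMem hx, and_assoc]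

theorem avoids_of_length_lt {pat w : List ℤ} (h : w.length < pat.length) : Avoids pat w :=
  fun i hi => by have := hi.length_le; simp at this; omega

theorem avoids_append_cons_iff_of_length_lt {pat a b : List ℤ} {x : ℤ} (hx : x ∉ pat)
    (ha : a.length < pat.length) : Avoids pat (a ++ x :: b) ↔ Avoids pat b := by
  simp [avoids_append_cons_iff hx, avoids_of_length_lt ha]

theorem exists_eq_append_neg_one_of_sum_lt {r : List ℤ} (hr : ∀ s ∈ r, s = 1 ∨ s = -1)
    (h : ℕ) (hsum : r.sum < -h) :
    ∃ a b, r = a ++ -1 :: b ∧ (∀ p ∈ a.inits, -(h : ℤ) ≤ p.sum) ∧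
      a.sum = -(h : ℤ) := by
  induction r generalizing h with
  | nil => simp at hsum; omega
  | cons x r ih =>
    simp only [List.mem_cons, forall_eq_or_imp] at hr
    rcases hr.1 with rfl | rfl
    · obtain ⟨a, b, rfl, ha, hs⟩ := ih hr.2 (h + 1) (by simp at hsum; push_cast; omega)
      refine ⟨1 :: a, b, rfl, ?_, by simp [hs]⟩
      simp only [List.inits_cons, List.mem_cons, List.mem_map]
      rintro p (rfl | ⟨q, hq, rfl⟩)
      · simp
      · have := ha q hq; simp; push_cast at this; omega
    · cases h with
      | zero => exact ⟨[], r, rfl, by simp, rfl⟩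
      | succ h =>
        obtain ⟨a, b, rfl, ha, hs⟩ := ih hr.2 h (by simp at hsum; omega)
        refine ⟨-1 :: a, b, rfl, ?_, by simp [hs]⟩
        simp only [List.inits_cons, List.mem_cons, List.mem_map]
        rintro p (rfl | ⟨q, hq, rfl⟩)
        · simp
        · have := ha q hq; simp; omega

namespace IsDyckWord

theorem nil : IsDyckWord [] := ⟨by simp, by simp [NonnegPrefixes], rfl⟩

theorem cons_append {a b : List ℤ} (ha : IsDyckWord a) (hb : IsDyckWord b) :
    IsDyckWord (1 :: (a ++ -1 :: b)) := by
  obtain ⟨has, hap, ha0⟩ := ha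
  obtain ⟨hbs, hbp, hb0⟩ := hb
  refine ⟨?_, ?_, by simp [ha0, hb0]⟩
  · simp only [List.mem_cons, List.mem_append]
    rintro s (rfl | hs | rfl | hs)
    exacts [.inl rfl, has s hs, .inr rfl, hbs s hs]
  · simp only [NonnegPrefixes, List.inits_cons, List.inits_append, List.mem_cons, List.mem_map,
      List.mem_append, List.tail_cons]
    rintro p (rfl | ⟨q, (hq | ⟨r, ⟨r, hr, rfl⟩, rfl⟩), rfl⟩)
    · simp
    · have := hap q hq; simp; omega
    · have := hbp r hr; simp [ha0]; omega

theorem eq_nil_or_eq_cons_append {w : List ℤ} (hw : IsDyckWord w) :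
    w = [] ∨ ∃ a b, IsDyckWord a ∧ IsDyckWord b ∧ w = 1 :: (a ++ -1 :: b) := by
  obtain ⟨hs, hp, h0⟩ := hw
  rcases w with _ | ⟨x, r⟩
  · exact .inl rfl
  simp only [List.mem_cons, forall_eq_or_imp] at hs
  obtain rfl : x = 1 := by
    have := hp [x] (by simp)
    rcases hs.1 with rfl | rfl <;> simp_all
  obtain ⟨a, b, rfl, hap, ha0⟩ :=
    exists_eq_append_neg_one_of_sum_lt hs.2 0 (by simp at h0; omega)
  simp only [List.mem_append, List.mem_cons] at hs
  refine .inr ⟨a, b, ⟨fun s h => hs.2 s (.inl h), fun p hp => by simpa using hap p hp, ha0⟩,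
    ⟨fun s h => hs.2 s (.inr (.inr h)), fun p hp' => ?_, by simp [ha0] at h0; omega⟩, rfl⟩
  have hpre : 1 :: (a ++ -1 :: p) <+: 1 :: (a ++ -1 :: b) := by
    simpa [List.mem_inits] using hp'
  simpa [ha0] using hp _ ((List.mem_inits _ _).2 hpre)

theorem length_le_of_append_eq {a a' b b' : List ℤ} (ha : a.sum = 0)
    (ha' : NonnegPrefixes a') (h : a ++ -1 :: b = a' ++ b') : a'.length ≤ a.length := by
  by_contra! hlt
  have hpre : a ++ [-1] <+: a' :=
    List.prefix_of_prefix_length_le (by rw [← h]; simp) (List.prefix_append _ _)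
      (by simp; omega)
  have := ha' _ ((List.mem_inits _ _).2 hpre)
  simp [ha] at this

theorem append_neg_one_inj {a a' b b' : List ℤ} (ha : IsDyckWord a) (ha' : IsDyckWord a')
    (h : a ++ -1 :: b = a' ++ -1 :: b') : a = a' ∧ b = b' := by
  have hlen := le_antisymm (length_le_of_append_eq ha'.2.2 ha.2.1 h.symm)
    (length_le_of_append_eq ha.2.2 ha'.2.1 h)
  simpa using List.append_inj h hlen

theorem even_length {w : List ℤ} (hw : IsDyckWord w) : Even w.length := by
  have key : ∀ l : List ℤ, (∀ s ∈ l, s = 1 ∨ s = -1) → (l.length : ℤ) % 2 = l.sum % 2 := by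
    intro l hl
    induction l with
    | nil => rfl
    | cons x l ih =>
      simp only [List.mem_cons, forall_eq_or_imp] at hl
      have := ih hl.2
      simp only [List.length_cons, List.sum_cons]
      rcases hl.1 with rfl | rfl <;> omega
  have := key w hw.1
  rw [hw.2.2] at this
  exact Nat.even_iff.2 (by omega)

theorem finite_length_eq (n : ℕ) :
    {w : List ℤ | IsDyckWord w ∧ w.length = n}.Finite := by
  refine ((List.finite_length_eq Bool n).image
    (List.map fun b => if b then 1 else -1)).subset ?_
  rintro w ⟨hw, rfl⟩
  refine ⟨w.map (· = 1), by simp, ?_⟩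
  conv_rhs => rw [← List.map_id w]
  rw [List.map_map]
  refine List.map_congr_left fun s hs => ?_
  rcases hw.1 s hs with rfl | rfl <;> simp

end IsDyckWord

abbrev UUUAvoidingDyck (n : ℕ) : Type :=
  {w : List ℤ // IsDyckWord w ∧ w.length = 2 * n ∧ Avoids pUUU w}

theorem avoids_pUUU_UD_iff {w : List ℤ} : Avoids pUUU (1 :: -1 :: w) ↔ Avoids pUUU w :=
  avoids_append_cons_iff_of_length_lt (a := [1]) (by decide) (by decide)

theorem avoids_pUUU_UUD_iff {w : List ℤ} :
    Avoids pUUU (1 :: 1 :: -1 :: w) ↔ Avoids pUUU w :=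
  avoids_append_cons_iff_of_length_lt (a := [1, 1]) (by decide) (by decide)

namespace UUUAvoidingDyck

instance (n : ℕ) : Finite (UUUAvoidingDyck n) :=
  ((IsDyckWord.finite_length_eq (2 * n)).subset fun _ hw => ⟨hw.1, hw.2.1⟩).to_subtype

theorem card_zero : Nat.card (UUUAvoidingDyck 0) = 1 := by
  rw [Nat.card_eq_one_iff_unique]
  refine ⟨⟨fun ⟨w, hw⟩ ⟨w', hw'⟩ => ?_⟩,
    ⟨⟨[], IsDyckWord.nil, rfl, avoids_of_length_lt (by decide)⟩⟩⟩
  rw [Subtype.mk.injEq, List.eq_nil_of_length_eq_zero hw.2.1,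
    List.eq_nil_of_length_eq_zero hw'.2.1]

def join (n : ℕ) :
    UUUAvoidingDyck n ⊕ (Σ k : Fin n, UUUAvoidingDyck k × UUUAvoidingDyck (n - 1 - k)) →
      UUUAvoidingDyck (n + 1)
  | .inl w =>
    ⟨1 :: -1 :: w.1, IsDyckWord.nil.cons_append w.2.1, by simp [w.2.2.1]; ring,
      avoids_pUUU_UD_iff.2 w.2.2.2⟩
  | .inr ⟨k, a, b⟩ =>
    ⟨1 :: 1 :: -1 :: (a.1 ++ -1 :: b.1),
      (IsDyckWord.nil.cons_append a.2.1).cons_append b.2.1, by simp [a.2.2.1, b.2.2.1]; omega,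
      avoids_pUUU_UUD_iff.2 ((avoids_append_cons_iff (by decide)).2 ⟨a.2.2.2, b.2.2.2⟩)⟩

theorem join_injective (n : ℕ) : Function.Injective (join n) := by
  rintro (⟨w, hw⟩ | ⟨k, ⟨a, ha⟩, ⟨b, hb⟩⟩) (⟨w', hw'⟩ | ⟨k', ⟨a', ha'⟩, ⟨b', hb'⟩⟩) h <;>
    simp only [join, Subtype.mk.injEq, List.cons.injEq] at h
  · simp [h.2.2]
  · norm_num at h
  · norm_num at h
  · obtain ⟨rfl, rfl⟩ := ha.1.append_neg_one_inj ha'.1 h.2.2.2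
    obtain rfl : k = k' := Fin.ext (by omega)
    rfl

theorem join_surjective (n : ℕ) : Function.Surjective (join n) := by
  rintro ⟨w, hw, hlen, hav⟩
  rcases hw.eq_nil_or_eq_cons_append with rfl | ⟨a, b, ha, hb, rfl⟩
  · simp at hlen
  rcases ha.eq_nil_or_eq_cons_append with rfl | ⟨c, d, hc, hd, rfl⟩
  · exact ⟨.inl ⟨b, hb, by simp at hlen; omega, avoids_pUUU_UD_iff.1 hav⟩, rfl⟩
  rcases hc.eq_nil_or_eq_cons_append with rfl | ⟨_, _, _, _, rfl⟩
  · simp only [List.nil_append, List.cons_append] at hav hlen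
    have hav' := (avoids_append_cons_iff (by decide)).1 (avoids_pUUU_UUD_iff.1 hav)
    obtain ⟨k, hk⟩ := hd.even_length
    simp only [List.length_cons, List.length_append] at hlen
    exact ⟨.inr ⟨⟨k, by omega⟩, ⟨d, hd, by dsimp only; omega, hav'.1⟩,
      ⟨b, hb, by dsimp only; omega, hav'.2⟩⟩, rfl⟩
  -- here `w` begins with `UUU`
  · exact absurd hav fun h => h 0 ⟨_, rfl⟩

theorem card_succ (n : ℕ) :
    Nat.card (UUUAvoidingDyck (n + 1)) = Nat.card (UUUAvoidingDyck n) +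
      ∑ k ∈ Finset.range n,
        Nat.card (UUUAvoidingDyck k) * Nat.card (UUUAvoidingDyck (n - 1 - k)) := by
  rw [← Nat.card_eq_of_bijective _ ⟨join_injective n, join_surjective n⟩, Nat.card_sum,
    Nat.card_sigma, ← Fin.sum_univ_eq_sum_range]
  simp only [Nat.card_prod]

end UUUAvoidingDyck

/-- The number of Dyck paths of semilength n avoiding the factor UUU equals the n-th
Motzkin number, where the Motzkin numbers satisfy M₀ = 1 and
M_{n+1} = M_n + Σ_{k=0}^{n-1} M_k M_{n-1-k}. -/
theorem stmt_15 :
    ∃ M : ℕ → ℕ, M 0 = 1 ∧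
      (∀ n : ℕ, M (n + 1) = M n + ∑ k ∈ Finset.range n, M k * M (n - 1 - k)) ∧
      ∀ n : ℕ, Nat.card {w : List ℤ // IsDyckWord w ∧ w.length = 2 * n ∧
        Avoids pUUU w} = M n :=
  ⟨fun n => Nat.card (UUUAvoidingDyck n), UUUAvoidingDyck.card_zero, UUUAvoidingDyck.card_succ,
    fun _ => rfl⟩
end

section
/- For every Dyck meander with catastrophes P of length n+1 that decomposes as P = UαD_iβ with i ≥ 3 (α D_{i-1} ending on the x-axis), the Dyck path φ(P) starts with (UD)^k for some k ≥ 1 and contains an occurrence of the factor UUU starting at height 0. -/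
/-- The recursive equations defining the paper's map φ from Dyck meanders with
catastrophes to Dyck paths:
φ(ε) = ε; φ(Uα) = UD φ(α); φ(UαDβ) = UUD φ(α) D φ(β);
φ(UαD₂β) = U φ(αD) D φ(β); φ(UαD_iβ) = UD φ(αD_{i-1}) φ(β) for i ≥ 3. -/
def PhiSpec (φ : List ℤ → List ℤ) : Prop :=
  (φ [] = []) ∧
  (∀ α : List ℤ, (∀ s ∈ α, s = 1 ∨ s = -1) → NonnegPrefixes α →
      φ (1 :: α) = 1 :: -1 :: φ α) ∧
  (∀ α β : List ℤ, (∀ s ∈ α, s = 1 ∨ s = -1) → NonnegPrefixes α → α.sum = 0 →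
      IsDyckMeanderCat β →
      φ (1 :: (α ++ -1 :: β)) = 1 :: 1 :: -1 :: (φ α ++ -1 :: φ β)) ∧
  (∀ α β : List ℤ, (∀ s ∈ α, s = 1 ∨ s = -1) → NonnegPrefixes α → α.sum = 1 →
      IsDyckMeanderCat β →
      φ (1 :: (α ++ -2 :: β)) = 1 :: (φ (α ++ [-1]) ++ -1 :: φ β)) ∧
  (∀ (α β : List ℤ) (i : ℕ), 3 ≤ i → (∀ s ∈ α, s = 1 ∨ s = -1) → NonnegPrefixes α →
      α.sum = (i : ℤ) - 1 → IsDyckMeanderCat β →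
      φ (1 :: (α ++ (-(i : ℤ)) :: β)) = 1 :: -1 :: (φ (α ++ [-((i : ℤ) - 1)]) ++ φ β))

/-! Since φ(UαD_iβ) = UD·φ(αD_{i-1})·φ(β), it suffices that φ(γD_m) contains UUU at height 0
whenever γ is a nonnegative U/D-path ending at height m ≥ 2. Decompose γ = Uγ' by first return.
If γ' never drops below its start, then φ(Uγ'D₂) = U·φ(γ'D)·D, and φ(γ'D) starts with UUD
because γ'D is a nonempty Dyck word, while for m ≥ 3, φ(Uγ'D_m) = UD·φ(γ'D_{m-1}) and we
recurse. Otherwise γ = UaDε with a Dyck, and φ(UaDεD_m) = UUD·φ(a)·D·φ(εD_m); as φ maps Dyck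
words to paths ending at height 0, the prefix before φ(εD_m) ends at height 0 and we recurse on
ε. -/

def IsUDWord (w : List ℤ) : Prop := ∀ s ∈ w, s = 1 ∨ s = -1

theorem nonnegPrefixes_iff_forall_take (w : List ℤ) :
    NonnegPrefixes w ↔ ∀ k, 0 ≤ (w.take k).sum := by
  simp only [NonnegPrefixes, List.mem_inits]
  constructor
  · exact fun h k => h _ (List.take_prefix k w)
  · rintro h p ⟨t, rfl⟩
    simpa using h p.length

theorem nonnegPrefixes_append_singleton (w : List ℤ) (s : ℤ) :
    NonnegPrefixes (w ++ [s]) ↔ NonnegPrefixes w ∧ 0 ≤ w.sum + s := by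
  simp [NonnegPrefixes, or_imp, forall_and]

theorem NonnegPrefixes.of_append {u v : List ℤ} (h : NonnegPrefixes (u ++ v))
    (hu : u.sum = 0) : NonnegPrefixes v := by
  rw [nonnegPrefixes_iff_forall_take] at h ⊢
  intro k
  simpa [List.take_length_add_append, hu] using h (u.length + k)

theorem exists_eq_append_neg_one_cons {γ : List ℤ} (hγ : IsUDWord γ)
    (h : ¬ NonnegPrefixes γ) :
    ∃ δ ε, γ = δ ++ -1 :: ε ∧ NonnegPrefixes δ ∧ δ.sum = 0 := by
  induction γ using List.reverseRecOn with
  | nil => exact absurd (by simp [NonnegPrefixes]) h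
  | append_singleton γ s ih =>
    by_cases hγ₀ : NonnegPrefixes γ
    · have hs := hγ s (by simp)
      have hneg : γ.sum + s < 0 := by
        simpa [nonnegPrefixes_append_singleton, hγ₀] using h
      have hγsum : 0 ≤ γ.sum := by
        simpa using (nonnegPrefixes_iff_forall_take γ).1 hγ₀ γ.length
      have hs' : s = -1 := by rcases hs with rfl | rfl <;> omega
      exact ⟨γ, [], by simp [hs'], hγ₀, by omega⟩
    · obtain ⟨δ, ε, rfl, hδ, hδsum⟩ := ih (fun t ht => hγ t (by simp [ht])) hγ₀
      exact ⟨δ, ε ++ [s], by simp, hδ, hδsum⟩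

theorem IsUDWord.eq_one_of_cons {s : ℤ} {w : List ℤ} (h : IsUDWord (s :: w))
    (hnn : NonnegPrefixes (s :: w)) : s = 1 := by
  have h1 := (nonnegPrefixes_iff_forall_take _).1 hnn 1
  rcases h s (by simp) with hs | hs <;> simp_all

theorem IsUDWord.append {u v : List ℤ} (hu : IsUDWord u) (hv : IsUDWord v) :
    IsUDWord (u ++ v) := by
  simpa [IsUDWord, or_imp, forall_and] using And.intro hu hv

theorem first_return {γ : List ℤ} (hγ : IsUDWord (1 :: γ)) (hnn : NonnegPrefixes (1 :: γ)) :
    NonnegPrefixes γ ∨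
      ∃ δ ε, γ = δ ++ -1 :: ε ∧ IsDyckWord δ ∧ IsUDWord ε ∧ NonnegPrefixes ε := by
  by_cases h : NonnegPrefixes γ
  · exact Or.inl h
  have hγ' : IsUDWord γ := fun s hs => hγ s (by simp [hs])
  obtain ⟨δ, ε, rfl, hδ, hδsum⟩ := exists_eq_append_neg_one_cons hγ' h
  refine Or.inr ⟨δ, ε, rfl, ⟨fun s hs => hγ' s (by simp [hs]), hδ, hδsum⟩,
    fun s hs => hγ' s (by simp [hs]), ?_⟩
  exact NonnegPrefixes.of_append (u := 1 :: δ ++ [-1]) (by simpa using hnn) (by simp [hδsum])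

theorem IsDyckWord.eq_cons_append {δ : List ℤ} (hδ : IsDyckWord δ) (hne : δ ≠ []) :
    ∃ a b, δ = 1 :: (a ++ -1 :: b) ∧ IsDyckWord a ∧ IsDyckWord b := by
  obtain ⟨hsteps, hnn, hsum⟩ := hδ
  obtain ⟨s, γ, rfl⟩ := List.exists_cons_of_ne_nil hne
  obtain rfl := IsUDWord.eq_one_of_cons hsteps hnn
  have hγsum : γ.sum = -1 := by simp at hsum; omega
  have hγ : ¬ NonnegPrefixes γ := fun h => by
    simpa [hγsum] using (nonnegPrefixes_iff_forall_take γ).1 h γ.length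
  obtain h | ⟨a, b, rfl, ha, hb, hbnn⟩ := first_return hsteps hnn
  · exact absurd h hγ
  · refine ⟨a, b, rfl, ha, ⟨hb, hbnn, ?_⟩⟩
    simp [ha.2.2] at hγsum
    omega

theorem IsDyckMeanderCat.of_isUDWord {w : List ℤ} (hw : IsUDWord w) (hnn : NonnegPrefixes w) :
    IsDyckMeanderCat w := by
  refine ⟨fun s hs => (hw s hs).imp_right le_of_eq, hnn, fun i hi hle => ?_⟩
  rw [List.getD_eq_getElem _ _ hi] at hle
  rcases hw _ (List.getElem_mem hi) with h | h <;> omega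

theorem IsDyckMeanderCat.append_catastrophe {w : List ℤ} {m : ℤ} (hw : IsUDWord w)
    (hnn : NonnegPrefixes w) (hsum : w.sum = m) (hm : 2 ≤ m) :
    IsDyckMeanderCat (w ++ [-m]) := by
  refine ⟨?_, (nonnegPrefixes_append_singleton w (-m)).2 ⟨hnn, by omega⟩, ?_⟩
  · simpa [or_imp, forall_and] using ⟨fun s hs => (hw s hs).imp_right le_of_eq, by omega⟩
  · intro i hi hle
    simp only [List.length_append, List.length_singleton] at hi
    rcases Nat.lt_succ_iff_lt_or_eq.1 hi with hi | rfl
    · rw [List.getD_eq_getElem _ _ (by simp; omega), List.getElem_append_left hi] at hle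
      rcases hw _ (List.getElem_mem hi) with h | h <;> omega
    · simp [hsum]

theorem isDyckMeanderCat_nil : IsDyckMeanderCat [] :=
  .of_isUDWord (by simp [IsUDWord]) (by simp [NonnegPrefixes])

def HasUUUAtZero (w : List ℤ) : Prop := ∃ j, OccursAt pUUU w j ∧ (w.take j).sum = 0

theorem hasUUUAtZero_of_prefix {w : List ℤ} (h : pUUU <+: w) : HasUUUAtZero w :=
  ⟨0, by simpa [OccursAt] using h, by simp⟩

theorem HasUUUAtZero.append_right {w : List ℤ} (h : HasUUUAtZero w) (v : List ℤ) :
    HasUUUAtZero (w ++ v) := by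
  obtain ⟨j, hocc, hsum⟩ := h
  have hj : j ≤ w.length := by
    have := hocc.length_le
    simp [pUUU] at this
    omega
  refine ⟨j, ?_, by rwa [List.take_append_of_le_length hj]⟩
  unfold OccursAt at hocc ⊢
  rw [List.drop_append_of_le_length hj]
  exact hocc.trans (List.prefix_append _ _)

theorem HasUUUAtZero.append_left {w : List ℤ} (h : HasUUUAtZero w) {u : List ℤ}
    (hu : u.sum = 0) : HasUUUAtZero (u ++ w) := by
  obtain ⟨j, hocc, hsum⟩ := h
  refine ⟨u.length + j, ?_, ?_⟩
  · simpa [OccursAt, List.drop_length_add_append] using hocc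
  · simp [List.take_length_add_append, hu, hsum]

namespace PhiSpec

variable {φ : List ℤ → List ℤ}

theorem sum_eq_zero (hφ : PhiSpec φ) {δ : List ℤ} (hδ : IsDyckWord δ) : (φ δ).sum = 0 := by
  induction hN : δ.length using Nat.strong_induction_on generalizing δ with
  | _ N ih =>
  rcases eq_or_ne δ [] with rfl | hne
  · simp [hφ.1]
  obtain ⟨a, b, rfl, ha, hb⟩ := hδ.eq_cons_append hne
  rw [hφ.2.2.1 a b ha.1 ha.2.1 ha.2.2 (.of_isUDWord hb.1 hb.2.1)]
  have hlen : (1 :: (a ++ -1 :: b)).length = a.length + b.length + 2 := by simp; omega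
  simp [ih _ (by omega) ha rfl, ih _ (by omega) hb rfl]

theorem uud_prefix (hφ : PhiSpec φ) {δ : List ℤ} (hδ : IsDyckWord δ) (hne : δ ≠ []) :
    [1, 1, -1] <+: φ δ := by
  obtain ⟨a, b, rfl, ha, hb⟩ := hδ.eq_cons_append hne
  rw [hφ.2.2.1 a b ha.1 ha.2.1 ha.2.2 (.of_isUDWord hb.1 hb.2.1)]
  exact ⟨_, rfl⟩

theorem hasUUUAtZero_append_catastrophe (hφ : PhiSpec φ) {γ : List ℤ} {m : ℤ} (hm : 2 ≤ m)
    (hγ : IsUDWord γ) (hnn : NonnegPrefixes γ) (hsum : γ.sum = m) :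
    HasUUUAtZero (φ (γ ++ [-m])) := by
  obtain ⟨-, -, hD₁, hD₂, hDᵢ⟩ := id hφ
  induction hN : γ.length using Nat.strong_induction_on generalizing γ m with
  | _ N ih =>
  have hne : γ ≠ [] := by rintro rfl; simp at hsum; omega
  obtain ⟨s, γ, rfl⟩ := List.exists_cons_of_ne_nil hne
  obtain rfl := hγ.eq_one_of_cons hnn
  have hγ' : IsUDWord γ := fun s hs => hγ s (by simp [hs])
  have hγsum : γ.sum = m - 1 := by simp at hsum; omega
  obtain hγnn | ⟨a, ε, rfl, ha, hε, hεnn⟩ := first_return hγ hnn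
  · rcases (show m = 2 ∨ 3 ≤ m by omega) with rfl | hm3
    · have hdyck : IsDyckWord (γ ++ [-1]) :=
        ⟨hγ'.append (by simp [IsUDWord]),
          (nonnegPrefixes_append_singleton _ _).2 ⟨hγnn, by omega⟩, by simp [hγsum]⟩
      have hrule := hD₂ γ [] hγ' hγnn (by omega) isDyckMeanderCat_nil
      obtain ⟨t, ht⟩ := hφ.uud_prefix hdyck (by simp)
      simp only [List.cons_append] at hrule ⊢
      rw [hrule, ← ht]
      exact hasUUUAtZero_of_prefix ⟨_, rfl⟩
    · lift m to ℕ using (by omega)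
      have hrule := hDᵢ γ [] m (by omega) hγ' hγnn hγsum isDyckMeanderCat_nil
      have hrec :=
        ih γ.length (by simp [← hN]) (by omega : (2 : ℤ) ≤ m - 1) hγ' hγnn hγsum rfl
      simp only [List.cons_append] at hrule ⊢
      rw [hrule]
      exact (hrec.append_right _).append_left (u := [1, -1]) (by simp)
  · have hεsum : ε.sum = m := by simp [ha.2.2] at hγsum; omega
    have hrule := hD₁ a (ε ++ [-m]) ha.1 ha.2.1 ha.2.2 (.append_catastrophe hε hεnn hεsum hm)
    have hrec := ih ε.length (by simp [← hN]; omega) hm hε hεnn hεsum rfl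
    simp only [List.cons_append, List.append_assoc] at hrule ⊢
    rw [hrule, show φ a ++ -1 :: φ (ε ++ [-m]) = φ a ++ [-1] ++ φ (ε ++ [-m]) by simp]
    exact hrec.append_left (u := 1 :: 1 :: -1 :: (φ a ++ [-1])) (by simp [hφ.sum_eq_zero ha])

end PhiSpec

theorem stmt_19_general (φ : List ℤ → List ℤ) (hφ : PhiSpec φ)
    (α β P : List ℤ) (i : ℕ) (hi : 3 ≤ i)
    (hα : ∀ s ∈ α, s = 1 ∨ s = -1) (hα' : NonnegPrefixes α)
    (hsum : α.sum = (i : ℤ) - 1) (hβ : IsDyckMeanderCat β)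
    (hPdef : P = 1 :: (α ++ (-(i : ℤ)) :: β)) :
    (∃ k : ℕ, 1 ≤ k ∧ (List.replicate k ([1, -1] : List ℤ)).flatten <+: φ P) ∧
    ∃ j, OccursAt pUUU (φ P) j ∧ ((φ P).take j).sum = 0 := by
  have hφP : φ P = [1, -1] ++ (φ (α ++ [-((i : ℤ) - 1)]) ++ φ β) := by
    rw [hPdef, hφ.2.2.2.2 α β i hi hα hα' hsum hβ]
    rfl
  refine ⟨⟨1, le_rfl, hφP ▸ List.prefix_append _ _⟩, ?_⟩
  have hcat := hφ.hasUUUAtZero_append_catastrophe (by omega) hα hα' hsum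
  rw [hφP]
  exact (hcat.append_right _).append_left (by simp)

/-- If a Dyck meander with catastrophes P of length n+1 decomposes as P = UαD_iβ with
i ≥ 3 (and αD_{i-1} ending on the x-axis), then φ(P) starts with (UD)^k for some
k ≥ 1 and contains an occurrence of UUU starting at height 0. -/
theorem stmt_19 (φ : List ℤ → List ℤ) (hφ : PhiSpec φ) (n : ℕ)
    (α β P : List ℤ) (i : ℕ) (hi : 3 ≤ i)
    (hα : ∀ s ∈ α, s = 1 ∨ s = -1) (hα' : NonnegPrefixes α)
    (hsum : α.sum = (i : ℤ) - 1) (hβ : IsDyckMeanderCat β)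
    (hPdef : P = 1 :: (α ++ (-(i : ℤ)) :: β))
    (hP : IsDyckMeanderCat P) (hn : P.length = n + 1) :
    (∃ k : ℕ, 1 ≤ k ∧ (List.replicate k ([1, -1] : List ℤ)).flatten <+: φ P) ∧
    ∃ j, OccursAt pUUU (φ P) j ∧ ((φ P).take j).sum = 0 :=
  stmt_19_general φ hφ α β P i hi hα hα' hsum hβ hPdef
end
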